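/- arXiv:1302.6870 — 2 statements merged into one kernel-verified Lean document; each statement's English description precedes it below -/
import Mathlib

section
/- Let G be an infinite, locally finite, connected, transitive graph, let v be a fixed vertex, and let p be such that ω_p almost surely contains a unique infinite cluster U. Let (Γ_n)_{n≥1} be site percolations such that each pair (ω_p, Γ_n) is jointly Aut(G)-invariant and lim_{n→∞} P[v ∈ Γ_n] = 0. Define ξ_{p,n} to be the set of vertices w with d_G(w,U) ≤ n such that ⋃_{u ∈ D(w)∪{w}} U(u) is contained in a single connected component of the subgraph induced by ω_p ∖ Γ_n, where D(w) is the set of neighbours of w and U(u) is the set of vertices of U at minimal graph distance from u. Then lim_{n→∞} P[v ∉ ξ_{p,n}] = 0. -/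
open MeasureTheory ProbabilityTheory Filter

namespace Percolation

variable {V : Type*}

/-- The subgraph of `G` induced by the vertex set `ω` (as a graph on all of `V`,
with vertices outside `ω` isolated). -/
def restrict (G : SimpleGraph V) (ω : Set V) : SimpleGraph V where
  Adj a b := G.Adj a b ∧ a ∈ ω ∧ b ∈ ω
  symm := ⟨fun _ _ h => ⟨h.1.symm, h.2.2, h.2.1⟩⟩
  loopless := ⟨fun a h => G.loopless.irrefl a h.1⟩

/-- The cluster (connected component) of `v` in the configuration `ω`. -/
def cluster (G : SimpleGraph V) (ω : Set V) (v : V) : Set V :=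
  {u | (restrict G ω).Reachable v u}

/-- `C^∞(ω)`: the set of vertices of `ω` lying in an infinite cluster of `ω`. -/
def Cinf (G : SimpleGraph V) (ω : Set V) : Set V :=
  {v | v ∈ ω ∧ (cluster G ω v).Infinite}

/-- `N(ω) ≥ 1`: the configuration `ω` contains an infinite cluster. -/
def HasInfCluster (G : SimpleGraph V) (ω : Set V) : Prop :=
  (Cinf G ω).Nonempty

/-- The collection of infinite clusters of the configuration `ω`. -/
def infClusters (G : SimpleGraph V) (ω : Set V) : Set (Set V) :=
  {C | ∃ v ∈ Cinf G ω, C = cluster G ω v}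

/-- `G` is (vertex-)transitive. -/
def VertexTransitive (G : SimpleGraph V) : Prop :=
  ∀ u v : V, ∃ g : G ≃g G, g u = v

/-- The topology of pointwise convergence on `Aut(G)` (with `V` discrete). -/
def autTop (G : SimpleGraph V) : TopologicalSpace (G ≃g G) :=
  letI : TopologicalSpace V := ⊥
  TopologicalSpace.induced (fun g => ((g : V → V), ((g.symm : V → V)))) inferInstance

/-- `G` is unimodular: there is a closed subgroup `H` of `Aut(G)` with
`|Stab_H(u)v| = |Stab_H(v)u|` for all `u, v`. -/
def Unimodular (G : SimpleGraph V) : Prop :=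
  ∃ H : Subgroup (G ≃g G),
    (letI := autTop G; IsClosed (H : Set (G ≃g G))) ∧
    ∀ u v : V,
      Nat.card {w : V | ∃ h ∈ H, h u = u ∧ h v = w} =
      Nat.card {w : V | ∃ h ∈ H, h v = v ∧ h u = w}

/-- The inner vertex boundary of `W`: vertices of `W` with a neighbour outside `W`. -/
def vertexBoundary (G : SimpleGraph V) (W : Set V) : Set V :=
  {v ∈ W | ∃ u, u ∉ W ∧ G.Adj v u}

/-- `G` is non-amenable: the vertex isoperimetric constant is positive. -/
def Nonamenable (G : SimpleGraph V) : Prop :=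
  ∃ c : ℝ, 0 < c ∧ ∀ W : Set V, W.Finite → W.Nonempty →
    c * (Nat.card W : ℝ) ≤ (Nat.card (vertexBoundary G W) : ℝ)

/-- `U` is a family of i.i.d. uniform-`[0,1]` random variables on `(Ω, P)`. -/
def IsIIDUniform {ι Ω : Type*} [MeasurableSpace Ω] (P : Measure Ω) (U : ι → Ω → ℝ) : Prop :=
  (∀ i, Measurable (U i)) ∧
  iIndepFun U P ∧
  ∀ i, Measure.map (U i) P = volume.restrict (Set.Icc 0 1)

/-- The standard coupling: `ω_p = {i : U i ≤ p}`. -/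
def config {ι Ω : Type*} (U : ι → Ω → ℝ) (p : ℝ) (x : Ω) : Set ι :=
  {i | U i x ≤ p}

/-- Bernoulli site percolation at level `p` on `G` percolates almost surely. -/
def percolates (G : SimpleGraph V) {Ω : Type*} [MeasurableSpace Ω]
    (P : Measure Ω) (U : V → Ω → ℝ) (p : ℝ) : Prop :=
  ∀ᵐ x ∂P, HasInfCluster G (config U p x)

/-- The critical probability `p_c(G)` for Bernoulli site percolation on `G`,
defined through the standard coupling `(P, U)`. -/
noncomputable def pcrit (G : SimpleGraph V) {Ω : Type*} [MeasurableSpace Ω]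
    (P : Measure Ω) (U : V → Ω → ℝ) : ℝ :=
  sInf {p : ℝ | 0 ≤ p ∧ p ≤ 1 ∧ percolates G P U p}

/-- The self-destructive percolation configuration `Φ(p, δ)`. -/
def SDP (G : SimpleGraph V) {Ω : Type*} (U Ut : V → Ω → ℝ) (p δ : ℝ) (x : Ω) : Set V :=
  (config U p x \ Cinf G (config U p x)) ∪ config Ut δ x

end Percolation

open Percolation

namespace Percolation

variable {V : Type*}

/-- `U(u)`: the set of vertices of `T` at minimal graph distance from `u`. -/
def nearSet (G : SimpleGraph V) (T : Set V) (u : V) : Set V :=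
  {y ∈ T | ∀ z ∈ T, G.dist u y ≤ G.dist u z}

/-- `S` is contained in a single connected component of the configuration `ω`. -/
def InOneComponent (G : SimpleGraph V) (ω S : Set V) : Prop :=
  S ⊆ ω ∧ ∀ a ∈ S, ∀ b ∈ S, (restrict G ω).Reachable a b

/-- The configuration `ξ`: vertices `w` with `d_G(w,T) ≤ n` such that
`⋃_{u ∈ D(w) ∪ {w}} U(u)` lies in one connected component of `ω ∖ Γ`. -/
def xiSet (G : SimpleGraph V) (T ω Γ : Set V) (n : ℕ) : Set V :=
  {w | (∃ u ∈ T, G.dist w u ≤ n) ∧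
    InOneComponent G (ω \ Γ)
      (⋃ u ∈ insert w (G.neighborSet w), nearSet G T u)}

end Percolation


/-!
Almost surely `U` is nonempty and the finitely many vertices of `⋃_{u ∈ D(v) ∪ {v}} U(u)` lie in
the single infinite cluster of `ω_p`. Being joined by finite paths, they are already joined inside
`ω_p ∩ B(v, r)` for all large `r`; so with probability tending to one (as `r → ∞`), `v ∈ ξ` holds
even when `Γ` removes everything outside `B(v, r)`. On that event, `v ∉ ξ_{p,n}` for `n ≥ r` forces
`Γ_n` to hit the finite ball `B(v, r)`, and by invariance and transitivity this has probability at
most `|B(v, r)| · P[v ∈ Γ_n]`.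
-/

open Topology

namespace SimpleGraph

variable {V : Type*} {G : SimpleGraph V}

lemma Preconnected.exists_adj_dist_le {u y : V} {n : ℕ} (hG : G.Preconnected)
    (hy : G.dist u y ≤ n + 1) : y = u ∨ ∃ z, G.Adj z y ∧ G.dist u z ≤ n := by
  obtain ⟨w, hw⟩ := (hG y u).exists_walk_length_eq_dist
  by_cases hnil : w.Nil
  · exact Or.inl hnil.eq
  · refine Or.inr ⟨w.snd, (w.adj_snd hnil).symm, ?_⟩
    have htail := w.length_tail_add_one hnil
    have hdist : G.dist w.snd u ≤ w.tail.length := dist_le w.tail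
    rw [dist_comm] at hw hdist
    lia

lemma Preconnected.finite_setOf_dist_le [G.LocallyFinite] (hG : G.Preconnected) (u : V) :
    ∀ n : ℕ, {y | G.dist u y ≤ n}.Finite
  | 0 => (Set.finite_singleton u).subset fun y hy =>
      (Reachable.dist_eq_zero_iff (hG u y)).mp (Nat.le_zero.mp hy) ▸ rfl
  | n + 1 => by
    have ih := hG.finite_setOf_dist_le u n
    refine ((ih.biUnion fun z _ => (G.neighborSet z).toFinite).insert u).subset fun y hy => ?_
    rcases hG.exists_adj_dist_le hy with rfl | ⟨z, hzy, hz⟩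
    · exact Set.mem_insert _ _
    · exact Set.mem_insert_of_mem _ (Set.mem_biUnion hz hzy)

lemma Preconnected.countable [G.LocallyFinite] (hG : G.Preconnected) (u : V) : Countable V :=
  Set.countable_univ_iff.mp <| (Set.countable_iUnion fun n : ℕ =>
    (hG.finite_setOf_dist_le u n).countable).mono fun y _ =>
    Set.mem_iUnion.mpr ⟨G.dist u y, le_refl (G.dist u y)⟩

end SimpleGraph

namespace Percolation

variable {V : Type*} {G : SimpleGraph V}

lemma restrict_mono {ω ω' : Set V} (h : ω ⊆ ω') : restrict G ω ≤ restrict G ω' :=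
  fun _ _ ⟨hab, ha, hb⟩ => ⟨hab, h ha, h hb⟩

lemma reachable_restrict_iff_exists_finset {ω : Set V} {a b : V} :
    (restrict G ω).Reachable a b ↔ ∃ s : Finset V, ↑s ⊆ ω ∧ (restrict G ↑s).Reachable a b := by
  classical
  constructor
  · rintro ⟨w⟩
    refine ⟨w.support.toFinset.filter (· ∈ ω), fun x hx => (Finset.mem_filter.mp hx).2,
      ⟨w.transfer _ fun e he => ?_⟩⟩
    induction e with
    | h x y =>
      obtain ⟨hxy, hx, hy⟩ := w.edges_subset_edgeSet he
      exact ⟨hxy, by simp [w.fst_mem_support_of_mem_edges he, hx],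
        by simp [w.snd_mem_support_of_mem_edges he, hy]⟩
  · rintro ⟨s, hs, h⟩
    exact h.mono (restrict_mono hs)

lemma eventually_reachable_restrict {ι : Type*} [Preorder ι] {ωs : ι → Set V}
    (hmono : Monotone ωs) {a b : V} (h : (restrict G (⋃ i, ωs i)).Reachable a b) :
    ∀ᶠ i in atTop, (restrict G (ωs i)).Reachable a b := by
  obtain ⟨s, hs, hab⟩ := reachable_restrict_iff_exists_finset.mp h
  have hsub : ∀ᶠ i in atTop, ∀ x ∈ s, x ∈ ωs i := by
    refine s.eventually_all.mpr fun x hx => ?_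
    obtain ⟨i, hi⟩ := Set.mem_iUnion.mp (hs hx)
    exact (eventually_ge_atTop i).mono fun j hij => hmono hij hi
  exact hsub.mono fun i hi => hab.mono (restrict_mono hi)

lemma InOneComponent.mono {ω ω' S : Set V} (h : InOneComponent G ω S) (hω : ω ⊆ ω') :
    InOneComponent G ω' S :=
  ⟨h.1.trans hω, fun a ha b hb => (h.2 a ha b hb).mono (restrict_mono hω)⟩

lemma InOneComponent.eventually {ι : Type*} [Preorder ι] {ωs : ι → Set V} {S : Set V}
    (h : InOneComponent G (⋃ i, ωs i) S) (hmono : Monotone ωs) (hS : S.Finite) :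
    ∀ᶠ i in atTop, InOneComponent G (ωs i) S := by
  have hsub : ∀ᶠ i in atTop, ∀ x ∈ S, x ∈ ωs i := by
    refine hS.eventually_all.mpr fun x hx => ?_
    obtain ⟨i, hi⟩ := Set.mem_iUnion.mp (h.1 hx)
    exact (eventually_ge_atTop i).mono fun j hij => hmono hij hi
  have hreach : ∀ᶠ i in atTop, ∀ a ∈ S, ∀ b ∈ S, (restrict G (ωs i)).Reachable a b :=
    hS.eventually_all.mpr fun a ha => hS.eventually_all.mpr fun b hb =>
      eventually_reachable_restrict hmono (h.2 a ha b hb)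
  exact hsub.and hreach

lemma inOneComponent_of_subset_cinf {ω S : Set V} (h : (infClusters G ω).Subsingleton)
    (hS : S ⊆ Cinf G ω) : InOneComponent G ω S := by
  refine ⟨fun y hy => (hS hy).1, fun a ha b hb => ?_⟩
  have hab : cluster G ω a = cluster G ω b := h ⟨a, hS ha, rfl⟩ ⟨b, hS hb, rfl⟩
  change b ∈ cluster G ω a
  rw [hab]
  exact SimpleGraph.Reachable.refl b

lemma xiSet_mono {T ω ω' Γ Γ' : Set V} {n n' : ℕ} (hω : ω \ Γ ⊆ ω' \ Γ') (hn : n ≤ n') :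
    xiSet G T ω Γ n ⊆ xiSet G T ω' Γ' n' :=
  fun _ ⟨⟨u, hu, hdist⟩, hcomp⟩ => ⟨⟨u, hu, hdist.trans hn⟩, hcomp.mono hω⟩

lemma nearSet_finite {T : Set V} {u : V} (hball : ∀ n : ℕ, {y | G.dist u y ≤ n}.Finite) :
    (nearSet G T u).Finite := by
  rcases T.eq_empty_or_nonempty with rfl | ⟨t, ht⟩
  · exact Set.finite_empty.subset fun _ hy => hy.1
  · exact (hball (G.dist u t)).subset fun _ hy => hy.2 t ht

section Measurability

variable {α : Type*} [MeasurableSpace α]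

lemma measurable_config {Ω : Type*} [MeasurableSpace Ω] {U : V → Ω → ℝ}
    (hU : ∀ i, Measurable (U i)) (p : ℝ) : Measurable fun x => config U p x :=
  measurable_set_iff.mpr fun i =>
    measurableSet_setOfPred.mp (measurableSet_le (hU i) measurable_const)

variable [Countable V] (G)

lemma measurable_reachable_restrict (a b : V) :
    Measurable fun ω : Set V => (restrict G ω).Reachable a b := by
  have h : (fun ω : Set V => (restrict G ω).Reachable a b) =
      fun ω => ∃ s : Finset V, ↑s ⊆ ω ∧ (restrict G ↑s).Reachable a b :=
    funext fun _ => propext reachable_restrict_iff_exists_finset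
  rw [h]
  fun_prop

lemma measurable_cinf : Measurable (Cinf G) := by
  refine measurable_set_iff.mpr fun y => (measurable_set_mem y).and ?_
  have hcluster : Measurable fun ω => cluster G ω y :=
    measurable_set_iff.mpr (measurable_reachable_restrict G y)
  exact MeasurableSet.setOfPred_infinite.mem.comp hcluster

variable {G}

lemma Measurable.inOneComponent {ω S : α → Set V} (hω : Measurable ω) (hS : Measurable S) :
    Measurable fun a => InOneComponent G (ω a) (S a) :=
  (hS.subset hω).and <| .forall fun x => .imp (by fun_prop) <| .forall fun y => .imp (by fun_prop)
    ((measurable_reachable_restrict G x y).comp hω)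

lemma Measurable.nearSet {T : α → Set V} (hT : Measurable T) (u : V) :
    Measurable fun a => nearSet G (T a) u := by
  refine measurable_set_iff.mpr fun y => ?_
  unfold Percolation.nearSet
  fun_prop

lemma Measurable.xiSet {T ω Γ : α → Set V} (hT : Measurable T) (hω : Measurable ω)
    (hΓ : Measurable Γ) (n : ℕ) : Measurable fun a => xiSet G (T a) (ω a) (Γ a) n := by
  refine measurable_set_iff.mpr fun w => .and ?_ (.inOneComponent ?_ ?_)
  · fun_prop
  · exact measurable_set_iff.mpr fun y => by simp only [Set.mem_sdiff]; fun_prop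
  · refine measurable_set_iff.mpr fun y => ?_
    have hnear := hT.nearSet (G := G)
    simp only [Set.mem_iUnion, exists_prop]
    fun_prop

end Measurability

lemma monotone_diff_compl_ball (ω : Set V) (w : V) :
    Monotone fun r : ℕ => ω \ {u | G.dist w u ≤ r}ᶜ :=
  fun _ _ h => Set.sdiff_subset_sdiff_right <| Set.compl_subset_compl.mpr fun _ hu => hu.trans h

lemma mem_xiSet_of_mem_xiSet_ball {T ω Γ : Set V} {w : V} {r n : ℕ}
    (h : w ∈ xiSet G T ω {u | G.dist w u ≤ r}ᶜ r) (hΓ : ∀ u, G.dist w u ≤ r → u ∉ Γ)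
    (hrn : r ≤ n) : w ∈ xiSet G T ω Γ n :=
  xiSet_mono (fun u ⟨hu, hur⟩ => ⟨hu, hΓ u (not_not.mp hur)⟩) hrn h

lemma eventually_mem_xiSet_ball [G.LocallyFinite] (hG : G.Preconnected) {ω : Set V}
    (huniq : ∃! C, C ∈ infClusters G ω) (w : V) :
    ∀ᶠ r : ℕ in atTop, w ∈ xiSet G (Cinf G ω) ω {u | G.dist w u ≤ r}ᶜ r := by
  have hsingle : (infClusters G ω).Subsingleton := fun _ hC _ hC' => huniq.unique hC hC'
  obtain ⟨_, ⟨u₀, hu₀, -⟩, -⟩ := huniq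
  set S := ⋃ u ∈ insert w (G.neighborSet w), nearSet G (Cinf G ω) u
  have hS : S.Finite := ((G.neighborSet w).toFinite.insert w).biUnion fun u _ =>
    nearSet_finite (hG.finite_setOf_dist_le u)
  have hSω : InOneComponent G ω S :=
    inOneComponent_of_subset_cinf hsingle (Set.iUnion₂_subset fun _ _ => Set.sep_subset _ _)
  have hunion : ⋃ r : ℕ, ω \ {u | G.dist w u ≤ r}ᶜ = ω := by
    refine Set.Subset.antisymm (Set.iUnion_subset fun _ => Set.sdiff_subset) fun u hu => ?_
    exact Set.mem_iUnion.mpr ⟨G.dist w u, hu, not_not.mpr (le_refl (G.dist w u))⟩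
  filter_upwards [eventually_ge_atTop (G.dist w u₀),
    (hunion ▸ hSω).eventually (monotone_diff_compl_ball ω w) hS] with r hr hcomp
  exact ⟨⟨u₀, hu₀, hr⟩, hcomp⟩

variable {Ω : Type*} [MeasurableSpace Ω] {P : Measure Ω}

lemma measure_notMem_xiSet_le {T ω Γ : Ω → Set V} {w : V} {r n : ℕ} (hrn : r ≤ n)
    (hball : {u | G.dist w u ≤ r}.Finite) :
    P {x | w ∉ xiSet G (T x) (ω x) (Γ x) n} ≤
      P {x | w ∉ xiSet G (T x) (ω x) {u | G.dist w u ≤ r}ᶜ r} +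
        ∑ u ∈ hball.toFinset, P {x | u ∈ Γ x} := by
  have hbad : {x | w ∉ xiSet G (T x) (ω x) (Γ x) n} ⊆
      {x | w ∉ xiSet G (T x) (ω x) {u | G.dist w u ≤ r}ᶜ r} ∪
        ⋃ u ∈ hball.toFinset, {x | u ∈ Γ x} := by
    intro x hx
    simp only [Set.mem_union, Set.mem_ofPred_eq, Set.mem_iUnion, Set.Finite.mem_toFinset,
      exists_prop]
    by_contra! hgood
    exact hx (mem_xiSet_of_mem_xiSet_ball hgood.1 hgood.2 hrn)
  exact (measure_mono hbad).trans <| (measure_union_le _ _).trans <|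
    add_le_add le_rfl (measure_biUnion_finset_le _ _)

lemma measure_mem_eq_of_map_image_eq {A B : Ω → Set V} (hA : Measurable A) (hB : Measurable B)
    (e : V ≃ V) (h : P.map (fun x => (e '' A x, e '' B x)) = P.map (fun x => (A x, B x)))
    (u : V) : P {x | e u ∈ B x} = P {x | u ∈ B x} := by
  have himage : Measurable fun s : Set V => e '' s :=
    measurable_set_iff.mpr fun a => by
      simp only [e.image_eq_preimage_symm, Set.mem_preimage]
      exact measurable_set_mem (e.symm a)
  have hmap : Measurable fun x => (e '' A x, e '' B x) := (himage.comp hA).prodMk (himage.comp hB)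
  have hs : MeasurableSet {q : Set V × Set V | e u ∈ q.2} :=
    measurable_snd (measurableSet_mem (e u))
  have hmeasure := congrArg (· {q : Set V × Set V | e u ∈ q.2}) h
  rw [Measure.map_apply hmap hs, Measure.map_apply (hA.prodMk hB) hs] at hmeasure
  simpa [Set.preimage, e.injective.mem_set_image] using hmeasure.symm

lemma measure_mem_eq_of_transitive (htrans : VertexTransitive G) {A B : Ω → Set V}
    (hA : Measurable A) (hB : Measurable B)
    (hinv : ∀ g : G ≃g G, P.map (fun x => (⇑g '' A x, ⇑g '' B x)) = P.map (fun x => (A x, B x)))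
    (u v : V) : P {x | u ∈ B x} = P {x | v ∈ B x} := by
  obtain ⟨g, rfl⟩ := htrans v u
  exact measure_mem_eq_of_map_image_eq hA hB g.toEquiv (hinv g) v

lemma tendsto_measure_compl_of_ae_exists_mem [IsFiniteMeasure P] {E : ℕ → Set Ω}
    (hE : ∀ r, MeasurableSet (E r)) (hmono : Monotone E) (h : ∀ᵐ x ∂P, ∃ r, x ∈ E r) :
    Tendsto (fun r => P (E r)ᶜ) atTop (𝓝 0) := by
  have hnull : P (⋂ r, (E r)ᶜ) = 0 := by
    rw [ae_iff] at h
    convert h using 2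
    ext
    simp
  simpa [hnull, Function.comp_def] using
    tendsto_measure_iInter_atTop (fun r => (hE r).compl.nullMeasurableSet)
      (fun _ _ h => Set.compl_subset_compl.mpr (hmono h)) ⟨0, measure_ne_top P _⟩

end Percolation

open scoped ENNReal in
lemma ENNReal.tendsto_zero_of_le_add_mul {ι κ : Type*} {l : Filter ι} {m : Filter κ} [m.NeBot]
    {a d : ι → ℝ≥0∞} {b c : κ → ℝ≥0∞} (hb : Tendsto b m (𝓝 0)) (hc : ∀ r, c r ≠ ∞)
    (hd : Tendsto d l (𝓝 0)) (h : ∀ r, ∀ᶠ n in l, a n ≤ b r + c r * d n) :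
    Tendsto a l (𝓝 0) := by
  refine tendsto_order.2 ⟨fun _ hε => absurd hε not_lt_zero, fun ε hε => ?_⟩
  obtain ⟨r, hr⟩ := (hb.eventually (gt_mem_nhds hε)).exists
  have hlim : Tendsto (fun n => b r + c r * d n) l (𝓝 (b r)) := by
    simpa using tendsto_const_nhds.add (ENNReal.Tendsto.const_mul hd (Or.inr (hc r)))
  filter_upwards [h r, hlim.eventually (gt_mem_nhds hr)] with n hle hlt using hle.trans_lt hlt

theorem stmt11_general {V : Type*} (G : SimpleGraph V)
    (hlf : G.LocallyFinite) (hconn : G.Connected)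
    (htrans : VertexTransitive G) (v : V)
    {Ω : Type*} [MeasurableSpace Ω] (P : Measure Ω) [IsProbabilityMeasure P]
    (U : V → Ω → ℝ) (hiid : IsIIDUniform P U) (p : ℝ)
    (huniq : ∀ᵐ x ∂P, ∃! C, C ∈ infClusters G (config U p x))
    (Γ : ℕ → Ω → Set V) (hmeas : ∀ n, Measurable (Γ n))
    (hinv : ∀ n : ℕ, ∀ g : G ≃g G,
      Measure.map (fun x => (⇑g '' config U p x, ⇑g '' Γ n x)) P =
        Measure.map (fun x => (config U p x, Γ n x)) P)
    (hlim : Tendsto (fun n => P {x | v ∈ Γ n x}) atTop (nhds 0)) :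
    Tendsto
      (fun n =>
        P {x | v ∉ xiSet G (Cinf G (config U p x)) (config U p x) (Γ n x) n})
      atTop (nhds 0) := by
  have := hlf
  have : Countable V := hconn.preconnected.countable v
  have hω := measurable_config hiid.1 p
  have hball := hconn.preconnected.finite_setOf_dist_le v
  set E : ℕ → Set Ω := fun r =>
    {x | v ∈ xiSet G (Cinf G (config U p x)) (config U p x) {u | G.dist v u ≤ r}ᶜ r}
  have hE : Tendsto (fun r => P (E r)ᶜ) atTop (nhds 0) := by
    refine tendsto_measure_compl_of_ae_exists_mem (fun r => ?_) (fun r r' h x hx => ?_) ?_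
    · exact measurableSet_setOfPred.mpr <| (measurable_set_mem v).comp <|
        ((measurable_cinf G).comp hω).xiSet hω measurable_const r
    · exact xiSet_mono (monotone_diff_compl_ball _ v h) h hx
    · exact huniq.mono fun x hx => (eventually_mem_xiSet_ball hconn.preconnected hx v).exists
  refine ENNReal.tendsto_zero_of_le_add_mul hE
    (fun r => ENNReal.natCast_ne_top (hball r).toFinset.card) hlim fun r => ?_
  filter_upwards [eventually_ge_atTop r] with n hrn
  calc _ ≤ P (E r)ᶜ + ∑ u ∈ (hball r).toFinset, P {x | u ∈ Γ n x} :=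
        measure_notMem_xiSet_le hrn (hball r)
    _ = P (E r)ᶜ + (hball r).toFinset.card * P {x | v ∈ Γ n x} := by
      rw [Finset.sum_congr rfl fun u _ =>
        measure_mem_eq_of_transitive htrans hω (hmeas n) (hinv n) u v, Finset.sum_const,
        nsmul_eq_mul]

/-- In the regime of a unique infinite cluster `U = C^∞(ω_p)`,
`P[v ∉ ξ_{p,n}] → 0` as `n → ∞`. -/
theorem stmt11 {V : Type*} (G : SimpleGraph V) [Infinite V]
    (hlf : G.LocallyFinite) (hconn : G.Connected)
    (htrans : VertexTransitive G) (v : V)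
    {Ω : Type*} [MeasurableSpace Ω] (P : Measure Ω) [IsProbabilityMeasure P]
    (U : V → Ω → ℝ) (hiid : IsIIDUniform P U) (p : ℝ)
    (huniq : ∀ᵐ x ∂P, ∃! C, C ∈ infClusters G (config U p x))
    (Γ : ℕ → Ω → Set V) (hmeas : ∀ n, Measurable (Γ n))
    (hinv : ∀ n : ℕ, ∀ g : G ≃g G,
      Measure.map (fun x => (⇑g '' config U p x, ⇑g '' Γ n x)) P =
        Measure.map (fun x => (config U p x, Γ n x)) P)
    (hlim : Tendsto (fun n => P {x | v ∈ Γ n x}) atTop (nhds 0)) :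
    Tendsto
      (fun n =>
        P {x | v ∉ xiSet G (Cinf G (config U p x)) (config U p x) (Γ n x) n})
      atTop (nhds 0) :=
  stmt11_general G hlf hconn htrans v P U hiid p huniq Γ hmeas hinv hlim
end

section
/- Let G be an infinite, locally finite, connected graph, let ω ⊆ V be a configuration with a unique infinite cluster U of the induced subgraph, and let Γ ⊆ V. Define ξ to be the set of vertices w with d_G(w,U) ≤ n such that ⋃_{u ∈ D(w)∪{w}} U(u) is contained in a single connected component of the subgraph induced by ω ∖ Γ, where D(w) is the set of neighbours of w and U(u) is the set of vertices of U at minimal graph distance from u. If the subgraph of G induced by ξ contains an infinite connected component ξ^∞, then ⋃_{v ∈ ξ^∞} U(v) is contained in a single connected component of the subgraph induced by ω ∖ Γ, and this component is infinite; in particular ω ∖ Γ contains an infinite cluster. -/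
/-! If `v ~ x` are adjacent in `ξ`, then `U(v) ∪ U(x)` lies in the component of `ω ∖ Γ` attached
to `v`, so along any path in `ξ` all the sets `U(·)` are linked in `ω ∖ Γ`. Each point of `U(v)` is
within distance `n` of `v`, and balls of `G` are finite, so the infinitely many vertices of `ξ^∞`
produce infinitely many points of `⋃ U(v)`, all in one component of `ω ∖ Γ`. -/

open MeasureTheory ProbabilityTheory Filter

open Percolation

namespace Percolation

variable {V : Type*} {G : SimpleGraph V}

lemma mem_of_reachable_restrict {s : Set V} {a b : V} (h : (restrict G s).Reachable a b)
    (ha : a ∈ s) : b ∈ s := by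
  obtain ⟨p⟩ := h
  induction p with
  | nil => exact ha
  | cons h _ ih => exact ih h.2.2

lemma cluster_subset {s : Set V} {v : V} (hv : v ∈ s) : cluster G s v ⊆ s :=
  fun _ hu => mem_of_reachable_restrict hu hv

lemma nearSet_nonempty {T : Set V} (hT : T.Nonempty) (u : V) : (nearSet G T u).Nonempty := by
  obtain ⟨t, ht⟩ := hT
  exact ⟨Function.argminOn (G.dist u) T ⟨t, ht⟩, Function.argminOn_mem _ _ _,
    fun _ hz => Function.argminOn_le (G.dist u) T hz⟩

lemma finite_setOf_dist_le (hlf : G.LocallyFinite) (hconn : G.Connected) (y : V) (n : ℕ) :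
    {v | G.dist v y ≤ n}.Finite := by
  induction n with
  | zero =>
    refine (Set.finite_singleton y).subset fun v hv => ?_
    exact hconn.dist_eq_zero_iff.mp (Nat.le_zero.mp hv)
  | succ n ih =>
    have hstep : {v | G.dist v y ≤ n + 1} ⊆
        {v | G.dist v y ≤ n} ∪ ⋃ w ∈ {v | G.dist v y ≤ n}, G.neighborSet w := by
      intro v hv
      obtain ⟨p, hp⟩ := hconn.exists_walk_length_eq_dist v y
      cases p with
      | nil => exact Or.inl (by simp)
      | cons h q =>
        simp only [SimpleGraph.Walk.length_cons] at hp
        have hv' : G.dist v y ≤ n + 1 := hv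
        exact Or.inr (Set.mem_biUnion ((SimpleGraph.dist_le q).trans (by omega)) h.symm)
    have hnbr : ∀ w, (G.neighborSet w).Finite := fun w => (G.neighborSet w).toFinite
    exact (ih.union (ih.biUnion fun w _ => hnbr w)).subset hstep

lemma infinite_biUnion_nearSet (hlf : G.LocallyFinite) (hconn : G.Connected) {T K : Set V}
    {n : ℕ} (hK : ∀ v ∈ K, ∃ u ∈ T, G.dist v u ≤ n) (hinf : K.Infinite) :
    (⋃ v ∈ K, nearSet G T v).Infinite := by
  intro hfin
  refine hinf ((hfin.biUnion fun y _ => finite_setOf_dist_le hlf hconn y n).subset ?_)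
  intro v hv
  obtain ⟨u, hu, hun⟩ := hK v hv
  obtain ⟨a, ha⟩ := nearSet_nonempty ⟨u, hu⟩ v
  exact Set.mem_biUnion (Set.mem_biUnion hv ha) ((ha.2 u hu).trans hun)

section xiSet

variable {T ω Γ : Set V} {n : ℕ}

lemma reachable_of_mem_xiSet {w x y a b : V} (hw : w ∈ xiSet G T ω Γ n)
    (hx : x ∈ insert w (G.neighborSet w)) (hy : y ∈ insert w (G.neighborSet w))
    (ha : a ∈ nearSet G T x) (hb : b ∈ nearSet G T y) : (restrict G (ω \ Γ)).Reachable a b :=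
  hw.2.2 a (Set.mem_biUnion hx ha) b (Set.mem_biUnion hy hb)

lemma reachable_of_walk_restrict_xiSet {v v' a b : V}
    (p : (restrict G (xiSet G T ω Γ n)).Walk v v') (hv : v ∈ xiSet G T ω Γ n)
    (ha : a ∈ nearSet G T v) (hb : b ∈ nearSet G T v') :
    (restrict G (ω \ Γ)).Reachable a b := by
  induction p generalizing a with
  | nil => exact reachable_of_mem_xiSet hv (Set.mem_insert _ _) (Set.mem_insert _ _) ha hb
  | @cons v x _ h _ ih =>
    have hx : x ∈ xiSet G T ω Γ n := h.2.2
    obtain ⟨u, hu, -⟩ := hx.1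
    obtain ⟨c, hc⟩ := nearSet_nonempty (G := G) ⟨u, hu⟩ x
    exact (reachable_of_mem_xiSet hv (Set.mem_insert _ _) (Set.mem_insert_of_mem _ h.1) ha hc).trans
      (ih hx hc hb)

lemma inOneComponent_biUnion_nearSet_cluster {w : V} (hw : w ∈ xiSet G T ω Γ n) :
    InOneComponent G (ω \ Γ) (⋃ v ∈ cluster G (xiSet G T ω Γ n) w, nearSet G T v) := by
  have hK := cluster_subset (G := G) hw
  constructor
  · intro a ha
    obtain ⟨v, hv, hav⟩ := Set.mem_iUnion₂.mp ha
    exact (hK hv).2.1 (Set.mem_biUnion (Set.mem_insert _ _) hav)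
  · intro a ha b hb
    obtain ⟨v, hv, hav⟩ := Set.mem_iUnion₂.mp ha
    obtain ⟨v', hv', hbv'⟩ := Set.mem_iUnion₂.mp hb
    obtain ⟨p⟩ := (show (restrict G _).Reachable w v from hv).symm.trans hv'
    exact reachable_of_walk_restrict_xiSet p (hK hv) hav hbv'

end xiSet

lemma InOneComponent.cluster_infinite {ω S : Set V} (hS : InOneComponent G ω S)
    (hinf : S.Infinite) {a : V} (ha : a ∈ S) : (cluster G ω a).Infinite :=
  hinf.mono fun b hb => hS.2 a ha b hb

lemma InOneComponent.hasInfCluster {ω S : Set V} (hS : InOneComponent G ω S)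
    (hinf : S.Infinite) : HasInfCluster G ω :=
  let ⟨a, ha⟩ := hinf.nonempty
  ⟨a, hS.1 ha, hS.cluster_infinite hinf ha⟩

end Percolation

theorem stmt12_general {V : Type*} (G : SimpleGraph V)
    (hlf : G.LocallyFinite) (hconn : G.Connected)
    (ω Γ Uc : Set V) (n : ℕ)
    (w0 : V) (hw0 : w0 ∈ xiSet G Uc ω Γ n)
    (hinf : (cluster G (xiSet G Uc ω Γ n) w0).Infinite) :
    InOneComponent G (ω \ Γ)
        (⋃ u ∈ cluster G (xiSet G Uc ω Γ n) w0, nearSet G Uc u) ∧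
      (∀ a ∈ ⋃ u ∈ cluster G (xiSet G Uc ω Γ n) w0, nearSet G Uc u,
        (cluster G (ω \ Γ) a).Infinite) ∧
      HasInfCluster G (ω \ Γ) := by
  have hS := inOneComponent_biUnion_nearSet_cluster hw0
  have hSinf := infinite_biUnion_nearSet hlf hconn
    (fun v hv => (cluster_subset hw0 hv).1) hinf
  exact ⟨hS, fun _ ha => hS.cluster_infinite hSinf ha, hS.hasInfCluster hSinf⟩

/-- Deterministic lemma: if the subgraph induced by `ξ` has an infinite component
`ξ^∞`, then `⋃_{v ∈ ξ^∞} U(v)` lies in a single connected component of `ω ∖ Γ`,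
this component is infinite, and in particular `ω ∖ Γ` has an infinite cluster. -/
theorem stmt12 {V : Type*} (G : SimpleGraph V) [Infinite V]
    (hlf : G.LocallyFinite) (hconn : G.Connected)
    (ω Γ Uc : Set V) (n : ℕ)
    (hU : Uc ∈ infClusters G ω) (huniq : ∀ C ∈ infClusters G ω, C = Uc)
    (w0 : V) (hw0 : w0 ∈ xiSet G Uc ω Γ n)
    (hinf : (cluster G (xiSet G Uc ω Γ n) w0).Infinite) :
    InOneComponent G (ω \ Γ)
        (⋃ u ∈ cluster G (xiSet G Uc ω Γ n) w0, nearSet G Uc u) ∧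
      (∀ a ∈ ⋃ u ∈ cluster G (xiSet G Uc ω Γ n) w0, nearSet G Uc u,
        (cluster G (ω \ Γ) a).Infinite) ∧
      HasInfCluster G (ω \ Γ) :=
  stmt12_general G hlf hconn ω Γ Uc n w0 hw0 hinf
end
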